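/- Let L ≥ 2, n ≥ 1, m = n(L−1), let {h^k_j}_{j≥0} ⊂ ℂ (1 ≤ k ≤ L−1) be arbitrary sequences, let x ∈ ℂ, and define new sequences g^k_j := h^k_j − x·h^k_{j+1}. Then: (a) det of the (m+1)×(m+1) matrix with first row (1, x, x^2, …, x^m) and remaining rows the stacked blocks A^1_m(n,m+1), …, A^{L−1}_m(n,m+1) equals det of the m×m matrix with rows the stacked blocks G^1_{m−1}(n,m), …, G^{L−1}_{m−1}(n,m); and (b) for each 1 ≤ k ≤ L−1, det of the m×m matrix with first row (1, x, …, x^{m−1}) and remaining rows the stacked blocks A^1_m(n,m), …, A^{k−1}_m(n,m), A^k_m(n−1,m), A^{k+1}_{m−1}(n,m), …, A^{L−1}_{m−1}(n,m) equals det of the (m−1)×(m−1) matrix with rows the stacked blocks G^1_{m−1}(n,m−1), …, G^{k−1}_{m−1}(n,m−1), G^k_{m−1}(n−1,m−1), G^{k+1}_{m−2}(n,m−1), …, G^{L−1}_{m−2}(n,m−1). -/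

import Mathlib

/-! Because the first row is `(1, x, …, x^m)`, subtracting `x` times column `c` from column
`c + 1` (right to left) does not change the determinant and turns the first row into
`(1, 0, …, 0)`. The new entries below it are `h^k_j - x h^k_{j+1} = g^k_j` of the Toeplitz blocks,
with the lower index dropped by one, so expanding along the first row gives the `g`-determinant. -/

noncomputable section

/-- A sequence `ℕ → ℂ` extended by `0` to negative indices. -/
def hz (h : ℕ → ℕ → ℂ) (k : ℕ) : ℤ → ℂ := fun j => if 0 ≤ j then h k j.toNat else 0

/-- Entry `(r', c)` (0-indexed) of the stacked row-blocks
`A^1_m(n,·), …, A^{k-1}_m(n,·), A^k_m(n-1,·), A^{k+1}_{m-1}(n,·), …, A^{L-1}_{m-1}(n,·)`,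
where `m` is the common upper lower-index parameter. -/
def stackJ (n k m : ℕ) (a : ℕ → ℤ → ℂ) (r' c : ℕ) : ℂ :=
  if r' < (k - 1) * n then
    a (r' / n + 1) ((m : ℤ) + ((r' % n : ℕ) : ℤ) - (c : ℤ))
  else if r' < k * n - 1 then
    a k ((m : ℤ) + (((r' - (k - 1) * n : ℕ)) : ℤ) - (c : ℤ))
  else
    a ((r' - (k * n - 1)) / n + k + 1)
      ((m : ℤ) - 1 + ((((r' - (k * n - 1)) % n : ℕ)) : ℤ) - (c : ℤ))

theorem Matrix.det_eq_of_row_zero_eq_pow {R : Type*} [CommRing R] {m : ℕ} (x : R)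
    (M : Matrix (Fin (m + 1)) (Fin (m + 1)) R) (hM : ∀ c, M 0 c = x ^ (c : ℕ)) :
    M.det = (Matrix.of fun r c : Fin m => M r.succ c.succ - x * M r.succ c.castSucc).det := by
  set B : Matrix (Fin (m + 1)) (Fin (m + 1)) R :=
    Matrix.of fun r c => Fin.cases (M r 0) (fun c => M r c.succ - x * M r c.castSucc) c
  have hB : ∀ c : Fin m, B 0 c.succ = 0 := fun c => by
    simp [B, hM, pow_succ, mul_comm]
  calc M.det = B.det :=
        Matrix.det_eq_of_forall_col_eq_smul_add_pred (fun _ => x) (fun _ => rfl)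
          (fun _ _ => by simp [B])
    _ = _ := by
        rw [Matrix.det_succ_row_zero, Fin.sum_univ_succ]
        simp only [hB, mul_zero, zero_mul, Finset.sum_const_zero, add_zero]
        simp [B, hM, Matrix.submatrix]

theorem hz_sub_mul_hz_add_one {h : ℕ → ℕ → ℂ} {x : ℂ} {g : ℕ → ℤ → ℂ}
    (hg : ∀ k : ℕ, ∀ j : ℤ,
      g k j = if 0 ≤ j then h k j.toNat - x * h k (j.toNat + 1) else 0)
    (k : ℕ) {j : ℤ} (hj : 0 ≤ j) :
    hz h k j - x * hz h k (j + 1) = g k j := by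
  have hj1 : (j + 1).toNat = j.toNat + 1 := by omega
  simp [hz, hg, hj, hj1, show 0 ≤ j + 1 by omega]

theorem exists_stackJ_eq (n k r : ℕ) :
    ∃ (k' : ℕ) (o : ℤ), -1 ≤ o ∧
      ∀ (m c : ℕ) (a : ℕ → ℤ → ℂ), stackJ n k m a r c = a k' (m + o - c) := by
  unfold stackJ
  split_ifs
  · exact ⟨_, _, by omega, fun _ _ _ => rfl⟩
  · exact ⟨_, _, by omega, fun _ _ _ => rfl⟩
  · exact ⟨_, (((r - (k * n - 1)) % n : ℕ) : ℤ) - 1, by omega,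
      fun _ _ a => congrArg (a _) (by ring)⟩

theorem det_pow_row_hz_blocks (n m : ℕ) {h : ℕ → ℕ → ℂ} {x : ℂ} {g : ℕ → ℤ → ℂ}
    (hg : ∀ k : ℕ, ∀ j : ℤ,
      g k j = if 0 ≤ j then h k j.toNat - x * h k (j.toNat + 1) else 0) :
    Matrix.det (Matrix.of fun r c : Fin (m + 1) =>
        if (r : ℕ) = 0 then x ^ (c : ℕ)
        else hz h (((r : ℕ) - 1) / n + 1) ((m : ℤ) + ((((r : ℕ) - 1) % n : ℕ) : ℤ) - (c : ℤ))) =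
      Matrix.det (Matrix.of fun r c : Fin m =>
        g ((r : ℕ) / n + 1) ((m : ℤ) - 1 + (((r : ℕ) % n : ℕ) : ℤ) - (c : ℤ))) := by
  rw [Matrix.det_eq_of_row_zero_eq_pow x _ (fun c => by simp)]
  congr 1
  ext r c
  have hc := c.isLt
  simp only [Matrix.of_apply, Fin.val_succ, Fin.val_castSucc, Nat.add_sub_cancel,
    Nat.add_one_ne_zero, if_false]
  rw [← hz_sub_mul_hz_add_one hg _ (by omega)]
  push_cast; ring_nf

theorem det_pow_row_stackJ (n k m : ℕ) {h : ℕ → ℕ → ℂ} {x : ℂ} {g : ℕ → ℤ → ℂ}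
    (hg : ∀ k : ℕ, ∀ j : ℤ,
      g k j = if 0 ≤ j then h k j.toNat - x * h k (j.toNat + 1) else 0) :
    Matrix.det (Matrix.of fun r c : Fin m =>
        if (r : ℕ) = 0 then x ^ (c : ℕ) else stackJ n k m (hz h) ((r : ℕ) - 1) (c : ℕ)) =
      Matrix.det (Matrix.of fun r c : Fin (m - 1) => stackJ n k (m - 1) g (r : ℕ) (c : ℕ)) := by
  cases m with
  | zero => simp
  | succ m =>
    rw [Matrix.det_eq_of_row_zero_eq_pow x _ (fun c => by simp)]
    congr 1
    ext r c
    have hc := c.isLt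
    obtain ⟨k', o, ho, hstack⟩ := exists_stackJ_eq n k r
    simp only [Matrix.of_apply, Fin.val_succ, Fin.val_castSucc, Nat.add_sub_cancel,
      Nat.add_one_ne_zero, if_false, hstack]
    rw [← hz_sub_mul_hz_add_one hg _ (by omega)]
    push_cast; ring_nf

theorem eval_x_identities_general (L n : ℕ)
    (h : ℕ → ℕ → ℂ) (x : ℂ)
    (g : ℕ → ℤ → ℂ)
    (hg : ∀ k : ℕ, ∀ j : ℤ,
      g k j = if 0 ≤ j then h k j.toNat - x * h k (j.toNat + 1) else 0) :
    (Matrix.det (Matrix.of fun r c : Fin (n * (L - 1) + 1) =>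
        if (r : ℕ) = 0 then x ^ (c : ℕ)
        else hz h (((r : ℕ) - 1) / n + 1)
          (((n * (L - 1) : ℕ) : ℤ) + (((((r : ℕ) - 1) % n : ℕ)) : ℤ) - ((c : ℕ) : ℤ))) =
      Matrix.det (Matrix.of fun r c : Fin (n * (L - 1)) =>
        g ((r : ℕ) / n + 1)
          (((n * (L - 1) : ℕ) : ℤ) - 1 + ((((r : ℕ) % n : ℕ)) : ℤ) - ((c : ℕ) : ℤ)))) ∧
    (∀ k, 1 ≤ k → k < L →
      Matrix.det (Matrix.of fun r c : Fin (n * (L - 1)) =>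
          if (r : ℕ) = 0 then x ^ (c : ℕ)
          else stackJ n k (n * (L - 1)) (hz h) ((r : ℕ) - 1) (c : ℕ)) =
        Matrix.det (Matrix.of fun r c : Fin (n * (L - 1) - 1) =>
          stackJ n k (n * (L - 1) - 1) g (r : ℕ) (c : ℕ))) :=
  ⟨det_pow_row_hz_blocks n _ hg, fun k _ _ => det_pow_row_stackJ n k _ hg⟩

/-- Contracting the first row of monomial entries evaluated at `x` against the
Toeplitz blocks of `h` produces the Toeplitz blocks of `g^k_j = h^k_j - x·h^k_{j+1}`. -/
theorem eval_x_identities (L n : ℕ) (hL : 2 ≤ L) (hn : 0 < n)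
    (h : ℕ → ℕ → ℂ) (x : ℂ)
    (g : ℕ → ℤ → ℂ)
    (hg : ∀ k : ℕ, ∀ j : ℤ,
      g k j = if 0 ≤ j then h k j.toNat - x * h k (j.toNat + 1) else 0) :
    (Matrix.det (Matrix.of fun r c : Fin (n * (L - 1) + 1) =>
        if (r : ℕ) = 0 then x ^ (c : ℕ)
        else hz h (((r : ℕ) - 1) / n + 1)
          (((n * (L - 1) : ℕ) : ℤ) + (((((r : ℕ) - 1) % n : ℕ)) : ℤ) - ((c : ℕ) : ℤ))) =
      Matrix.det (Matrix.of fun r c : Fin (n * (L - 1)) =>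
        g ((r : ℕ) / n + 1)
          (((n * (L - 1) : ℕ) : ℤ) - 1 + ((((r : ℕ) % n : ℕ)) : ℤ) - ((c : ℕ) : ℤ)))) ∧
    (∀ k, 1 ≤ k → k < L →
      Matrix.det (Matrix.of fun r c : Fin (n * (L - 1)) =>
          if (r : ℕ) = 0 then x ^ (c : ℕ)
          else stackJ n k (n * (L - 1)) (hz h) ((r : ℕ) - 1) (c : ℕ)) =
        Matrix.det (Matrix.of fun r c : Fin (n * (L - 1) - 1) =>
          stackJ n k (n * (L - 1) - 1) g (r : ℕ) (c : ℕ))) :=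
  eval_x_identities_general L n h x g hg
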